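/- arXiv:1703.08652 — 3 statements merged into one kernel-verified Lean document; each statement's English description precedes it below -/
import Mathlib

section
/- Let n, l be positive integers and p a prime such that p^l divides n but p^{l+1} does not divide n. A connected circulant graph Cay(Z_n, S) of degree p^l − 1 (i.e., |S| = p^l − 1) admits a perfect code if and only if s ≢ s′ (mod p^l) for all distinct s, s′ ∈ S ∪ {0}. -/
/-!
Put `S₀ = S ∪ {0}`, so `|S₀| = p^l`, and let `π : ℤ_n → ℤ_{p^l}` be reduction. The perfect codes of
`Cay(ℤ_n, S)` are exactly the sets `C` with `C ⊕ S₀ = ℤ_n`, every vertex being uniquely `c + s`.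
If `π` is injective on `S₀`, then `ker π` is such a `C`. Conversely, such a `C` has `n / p^l`
elements, a number prime to `p`. For a nontrivial character `ψ` of `ℤ_{p^l}`,
`(∑_C ψ ∘ π) (∑_{S₀} ψ ∘ π) = ∑_{ℤ_n} ψ ∘ π = 0`, and the first factor, a sum of `|C|` roots of
unity of order `p^k`, is nonzero: otherwise `Φ_{p^k}` would divide the corresponding polynomial,
and evaluating at `1` gives `p ∣ |C|`. So all nontrivial Fourier coefficients of `π(S₀)` vanish,
`π(S₀)` is equidistributed on `ℤ_{p^l}`, and `π` is injective on `S₀`.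
-/

open Polynomial

/-- The circulant graph `Cay(Z_n, S)`: vertices are `ZMod n`, and `u, v` are adjacent
iff `v - u ∈ S` (here symmetrised; when `S = -S` this agrees with the usual definition). -/
def circulantGraph (n : ℕ) (S : Finset (ZMod n)) : SimpleGraph (ZMod n) :=
  SimpleGraph.fromRel (fun u v => v - u ∈ S)

/-- `C` is a perfect code in `G`: an independent set such that every vertex outside `C`
is adjacent to exactly one vertex of `C`. -/
def IsPerfectCode {V : Type*} (G : SimpleGraph V) (C : Set V) : Prop :=
  (∀ u ∈ C, ∀ v ∈ C, ¬ G.Adj u v) ∧ ∀ v, v ∉ C → ∃! c, c ∈ C ∧ G.Adj v c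

/-- `C` is a total perfect code in `G`: every vertex is adjacent to exactly one vertex of `C`. -/
def IsTotalPerfectCode {V : Type*} (G : SimpleGraph V) (C : Set V) : Prop :=
  ∀ v, ∃! c, c ∈ C ∧ G.Adj v c

open Finset Function

theorem IsPrimitiveRoot.prime_dvd_card_of_sum_pow_eq_zero {K ι : Type*} [Field K] [CharZero K]
    [Fintype ι] {p k : ℕ} [Fact p.Prime] {ζ : K} (hζ : IsPrimitiveRoot ζ (p ^ (k + 1)))
    (e : ι → ℕ) (h : ∑ i, ζ ^ e i = 0) : p ∣ Fintype.card ι := by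
  have hpos : 0 < p ^ (k + 1) := pow_pos (Fact.out : p.Prime).pos _
  have hdvd : cyclotomic (p ^ (k + 1)) ℤ ∣ ∑ i, X ^ e i := by
    rw [cyclotomic_eq_minpoly hζ hpos]
    exact minpoly.isIntegrallyClosed_dvd (hζ.isIntegral hpos) (by simpa using h)
  exact Int.natCast_dvd_natCast.1 (by simpa [eval_finsetSum] using eval_dvd (x := 1) hdvd)

theorem AddChar.sum_ne_zero_of_not_dvd_card {K ι : Type*} [Field K] [CharZero K] [Fintype ι]
    {p l : ℕ} [Fact p.Prime] {ψ : AddChar (ZMod (p ^ l)) K} (hψ : ψ ≠ 0)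
    (f : ι → ZMod (p ^ l)) (hι : ¬ p ∣ Fintype.card ι) : ∑ i, ψ (f i) ≠ 0 := by
  have hp : p.Prime := Fact.out
  have : NeZero (p ^ l) := ⟨pow_ne_zero _ hp.ne_zero⟩
  have hψval (x : ZMod (p ^ l)) : ψ x = ψ 1 ^ x.val := by
    rw [← map_nsmul_eq_pow, nsmul_one, ZMod.natCast_zmod_val]
  have hψ1 : ψ 1 ≠ 1 := (zmod_char_ne_one_iff _ ψ).1 hψ
  have hψN : ψ 1 ^ p ^ l = 1 := by
    rw [← map_nsmul_eq_pow, nsmul_one, ZMod.natCast_self, map_zero_eq_one]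
  obtain ⟨k, -, hk⟩ := (Nat.dvd_prime_pow hp).1 (orderOf_dvd_of_pow_eq_one hψN)
  obtain ⟨k, rfl⟩ : ∃ j, k = j + 1 := Nat.exists_eq_succ_of_ne_zero <| by
    rintro rfl
    exact hψ1 (orderOf_eq_one_iff.1 (by rw [hk, pow_zero]))
  intro h
  exact hι ((hk ▸ IsPrimitiveRoot.orderOf (ψ 1)).prime_dvd_card_of_sum_pow_eq_zero _
    ((Fintype.sum_congr _ _ fun i => hψval (f i)).symm.trans h))

theorem injective_of_sum_addChar_eq_zero {H ι : Type*} [AddCommGroup H] [Fintype H]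
    [Fintype ι] {f : ι → H} (hcard : Fintype.card ι = Fintype.card H)
    (h : ∀ ψ : AddChar H ℂ, ψ ≠ 0 → ∑ i, ψ (f i) = 0) : Injective f := by
  classical
  have hfiber (t : H) : #{i | f i = t} = 1 := by
    have hcount : (#{i | f i = t} : ℂ) * Fintype.card H = 1 * Fintype.card H := calc
      (#{i | f i = t} : ℂ) * Fintype.card H = ∑ i, ∑ ψ : AddChar H ℂ, ψ (f i - t) := by
        simp [AddChar.sum_apply_eq_ite, sub_eq_zero, Finset.sum_ite]
      _ = ∑ ψ : AddChar H ℂ, ψ (-t) * ∑ i, ψ (f i) := by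
        rw [Finset.sum_comm]
        simp [Finset.mul_sum, sub_eq_add_neg, AddChar.map_add_eq_mul, mul_comm]
      _ = 1 * Fintype.card H := by
        rw [Finset.sum_eq_single 0 (fun ψ _ hψ => by simp [h ψ hψ]) (by simp)]
        simp [hcard]
    exact_mod_cast mul_right_cancel₀ (by simp) hcount
  intro a b hab
  exact Finset.card_le_one.1 (hfiber (f a)).le a (by simp) b (by simp [hab])

namespace AddSubgroup

theorem IsComplement.sum_mul_sum {G R : Type*} [AddGroup G] [Fintype G] [CommSemiring R]
    {S T : Set G} [Fintype S] [Fintype T] (h : IsComplement S T) (ψ : AddChar G R) :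
    (∑ s : S, ψ s) * ∑ t : T, ψ t = ∑ g, ψ g := by
  rw [Finset.sum_mul_sum, ← Fintype.sum_prod_type']
  exact Fintype.sum_bijective _ h _ _ fun x => (AddChar.map_add_eq_mul ψ _ _).symm

theorem isComplement_ker_of_injOn {G H : Type*} [AddGroup G] [AddGroup H] [Finite H]
    (π : G →+ H) {A : Set G} (hA : Nat.card H ≤ Nat.card A) (hinj : Set.InjOn π A) :
    IsComplement (π.ker : Set G) A := by
  have hbij : Bijective (A.domRestrict π) :=
    (Set.injOn_iff_injective.1 hinj).bijective_of_nat_card_le hA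
  rw [isComplement_iff_existsUnique_add_neg_mem]
  intro g
  simp only [SetLike.mem_coe, AddMonoidHom.mem_ker, map_add, map_neg, add_neg_eq_zero]
  simpa [eq_comm] using (bijective_iff_existsUnique _).1 hbij (π g)

theorem IsComplement.injOn_of_not_dvd_card {G : Type*} [AddGroup G] [Finite G] {p l : ℕ}
    [Fact p.Prime] {π : G →+ ZMod (p ^ l)} (hπ : Surjective π) {C A : Set G}
    (h : IsComplement C A) (hC : ¬ p ∣ Nat.card C) (hA : Nat.card A = p ^ l) :
    Set.InjOn π A := by
  classical
  have := Fintype.ofFinite G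
  have : NeZero (p ^ l) := ⟨pow_ne_zero _ (Fact.out : p.Prime).ne_zero⟩
  rw [Set.injOn_iff_injective]
  refine injective_of_sum_addChar_eq_zero (by simpa [Nat.card_eq_fintype_card] using hA)
    fun ψ hψ => ?_
  have hχ : ψ.compAddMonoidHom π ≠ 0 := by
    obtain ⟨x, hx⟩ := AddChar.ne_zero_iff.1 hψ
    obtain ⟨g, rfl⟩ := hπ x
    exact AddChar.ne_zero_iff.2 ⟨g, hx⟩
  have hfactor := h.sum_mul_sum (ψ.compAddMonoidHom π)
  rw [AddChar.sum_eq_zero_iff_ne_zero.2 hχ] at hfactor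
  exact (mul_eq_zero.1 hfactor).resolve_left
    (AddChar.sum_ne_zero_of_not_dvd_card hψ _ (by simpa [Nat.card_eq_fintype_card] using hC))

end AddSubgroup

section Circulant

variable {n : ℕ} {S : Finset (ZMod n)}

theorem circulantGraph_adj (h0 : 0 ∉ S) (hneg : ∀ s ∈ S, -s ∈ S) {u v : ZMod n} :
    (circulantGraph n S).Adj u v ↔ u - v ∈ S := by
  rw [circulantGraph, SimpleGraph.fromRel_adj]
  refine ⟨fun ⟨_, h⟩ => h.elim (by simpa using hneg _ ·) id, fun h => ⟨?_, Or.inr h⟩⟩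
  rintro rfl
  exact h0 (by simpa using h)

theorem isPerfectCode_circulantGraph_iff (h0 : 0 ∉ S) (hneg : ∀ s ∈ S, -s ∈ S)
    {C : Set (ZMod n)} :
    IsPerfectCode (circulantGraph n S) C ↔ AddSubgroup.IsComplement C ↑(insert 0 S) := by
  have hS {s : ZMod n} (hs : s ∈ insert 0 S) (hs0 : s ≠ 0) : s ∈ S := mem_of_mem_insert_of_ne hs hs0
  simp only [IsPerfectCode, AddSubgroup.isComplement_iff_existsUnique_add_neg_mem,
    ← sub_eq_add_neg, circulantGraph_adj h0 hneg]
  constructor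
  · rintro ⟨hind, hcov⟩ v
    by_cases hv : v ∈ C
    · refine ⟨⟨0, by simp⟩, by simpa using hv, ?_⟩
      rintro ⟨s, hs⟩ hvs
      by_contra hs0
      exact hind v hv (v - s) hvs (by simpa using hS hs (by simpa using hs0))
    · obtain ⟨c, ⟨hc, hvc⟩, hc'⟩ := hcov v hv
      refine ⟨⟨v - c, mem_insert_of_mem hvc⟩, by simpa using hc, ?_⟩
      rintro ⟨s, hs⟩ hvs
      have hs0 : s ≠ 0 := by rintro rfl; exact hv (by simpa using hvs)
      have := hc' (v - s) ⟨hvs, by simpa using hS hs hs0⟩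
      ext
      simp [← this]
  · intro h
    refine ⟨fun u hu v hv huv => ?_, fun v hv => ?_⟩
    · obtain ⟨t, -, ht⟩ := h u
      have := (ht ⟨0, by simp⟩ (by simpa using hu)).trans
        (ht ⟨u - v, mem_insert_of_mem huv⟩ (by simpa using hv)).symm
      have huv0 : (0 : ZMod n) = u - v := congrArg Subtype.val this
      exact h0 (huv0 ▸ huv)
    · obtain ⟨⟨s, hs⟩, hvs, huniq⟩ := h v
      have hs0 : s ≠ 0 := by rintro rfl; exact hv (by simpa using hvs)
      refine ⟨v - s, ⟨hvs, by simpa using hS hs hs0⟩, fun c ⟨hc, hvc⟩ => ?_⟩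
      have := huniq ⟨v - c, mem_insert_of_mem hvc⟩ (by simpa using hc)
      simp only [Subtype.mk.injEq] at this
      simp [← this]

end Circulant

theorem circulant_perfectCode_iff_of_degree_primePow_pred_general
    (n l : ℕ) (p : ℕ) (hp : p.Prime)
    (hdvd : p ^ l ∣ n) (hndvd : ¬ p ^ (l + 1) ∣ n)
    (S : Finset (ZMod n)) (h0S : (0 : ZMod n) ∉ S) (hSneg : ∀ s ∈ S, -s ∈ S)
    (hcard : S.card = p ^ l - 1) :
    (∃ C : Set (ZMod n), IsPerfectCode (circulantGraph n S) C) ↔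
      (∀ s ∈ insert (0 : ZMod n) S, ∀ s' ∈ insert (0 : ZMod n) S,
        s ≠ s' → ¬ (s.val ≡ s'.val [MOD p ^ l])) := by
  have := Fact.mk hp
  have : NeZero n := ⟨by rintro rfl; exact hndvd (dvd_zero _)⟩
  set π : ZMod n →+ ZMod (p ^ l) := (ZMod.castHom hdvd _).toAddMonoidHom
  have hS₀ : Nat.card ((insert 0 S : Finset (ZMod n)) : Set (ZMod n)) = p ^ l := by
    simp [card_insert_of_notMem h0S, hcard, Nat.sub_add_cancel (Nat.one_le_pow _ _ hp.pos)]
  have hmod (s s' : ZMod n) : π s = π s' ↔ s.val ≡ s'.val [MOD p ^ l] := by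
    rw [← ZMod.natCast_eq_natCast_iff, ← ZMod.cast_eq_val, ← ZMod.cast_eq_val]
    rfl
  have hinj : (∀ s ∈ insert (0 : ZMod n) S, ∀ s' ∈ insert (0 : ZMod n) S,
      s ≠ s' → ¬ (s.val ≡ s'.val [MOD p ^ l])) ↔ Set.InjOn π ↑(insert 0 S) := by
    simp only [Set.InjOn, mem_coe, hmod]
    exact forall₂_congr fun _ _ => forall₂_congr fun _ _ => not_imp_not
  simp_rw [isPerfectCode_circulantGraph_iff h0S hSneg, hinj]
  refine ⟨fun ⟨C, hC⟩ => hC.injOn_of_not_dvd_card (ZMod.castHom_surjective hdvd) ?_ hS₀,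
    fun h => ⟨_, AddSubgroup.isComplement_ker_of_injOn π (by rw [Nat.card_zmod, hS₀]) h⟩⟩
  rintro ⟨k, hk⟩
  apply hndvd
  have := hC.card_mul_card
  rw [hS₀, Nat.card_zmod, hk] at this
  exact ⟨k, by rw [← this]; ring⟩

/-- **Theorem 1.2.** Let `n, l` be positive integers and `p` a prime with `p^l ∣ n` but
`p^(l+1) ∤ n`. A connected circulant graph `Cay(Z_n, S)` of degree `p^l - 1` admits a perfect
code iff `s ≢ s' (mod p^l)` for distinct `s, s' ∈ S ∪ {0}`. -/
theorem circulant_perfectCode_iff_of_degree_primePow_pred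
    (n l : ℕ) (hn : 0 < n) (hl : 0 < l) (p : ℕ) (hp : p.Prime)
    (hdvd : p ^ l ∣ n) (hndvd : ¬ p ^ (l + 1) ∣ n)
    (S : Finset (ZMod n)) (h0S : (0 : ZMod n) ∉ S) (hSneg : ∀ s ∈ S, -s ∈ S)
    (hcard : S.card = p ^ l - 1) (hconn : (circulantGraph n S).Connected) :
    (∃ C : Set (ZMod n), IsPerfectCode (circulantGraph n S) C) ↔
      (∀ s ∈ insert (0 : ZMod n) S, ∀ s' ∈ insert (0 : ZMod n) S,
        s ≠ s' → ¬ (s.val ≡ s'.val [MOD p ^ l])) :=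
  circulant_perfectCode_iff_of_degree_primePow_pred_general n l p hp hdvd hndvd S h0S hSneg hcard
end

section
/- Let p be an odd prime, let n be a positive integer divisible by p, and let S be a subset of Z_n with 0 ∉ S, S = −S, |S| = p − 1, and S generating Z_n. Then for every integer j ≥ 2 such that p^j divides n, the p^j-th cyclotomic polynomial λ_{p^j}(x) does not divide the polynomial f_{S∪{0}}(x) in Z[x]. -/
open Polynomial

/-!
Write `N = p ^ j` and `q = p ^ (j - 1)`, so that `λ_N = 1 + X^q + ⋯ + X^((p-1)q)`. Reducing the
exponents modulo `N` turns `f_{S∪{0}}` into a polynomial `g` of degree `< N` with nonnegative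
coefficients, `g(1) = p` and `g(0) ≥ 1`, still divisible by `λ_N`. In `g = λ_N * w` we have
`deg w < q`, so the `p` shifted copies of `w` do not overlap: every coefficient of `w` is a
coefficient of `g`. Hence `w ≥ 0`, `w(0) ≥ 1` and `w(1) = g(1) / λ_N(1) = 1`, which forces
`w = 1`. So every exponent of `g` is a multiple of `q`, hence of `p`, and `S` lies in the
kernel of `Z_n → Z_p`, so it cannot generate `Z_n`.
-/

open Finset

namespace Polynomial

variable {R ι : Type*}

theorem X_pow_sub_one_dvd_X_pow_sub_X_pow_mod [CommRing R] (N a : ℕ) :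
    (X : R[X]) ^ N - 1 ∣ X ^ a - X ^ (a % N) := by
  have h : (X : R[X]) ^ a - X ^ (a % N) = X ^ (a % N) * ((X ^ N) ^ (a / N) - 1) := by
    rw [mul_sub, mul_one, ← pow_mul, ← pow_add, Nat.mod_add_div]
  rw [h]
  exact dvd_mul_of_dvd_right (sub_one_dvd_pow_sub_one _ _) _

theorem X_pow_sub_one_dvd_sum_X_pow_sub_sum_X_pow_mod [CommRing R] (A : Finset ι) (e : ι → ℕ)
    (N : ℕ) : (X : R[X]) ^ N - 1 ∣ ∑ a ∈ A, X ^ e a - ∑ a ∈ A, X ^ (e a % N) := by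
  rw [← sum_sub_distrib]
  exact dvd_sum fun a _ => X_pow_sub_one_dvd_X_pow_sub_X_pow_mod N (e a)

theorem coeff_sum_X_pow [Semiring R] (A : Finset ι) (e : ι → ℕ) (m : ℕ) :
    (∑ a ∈ A, (X : R[X]) ^ e a).coeff m = #{a ∈ A | m = e a} := by
  simp only [finsetSum_coeff, coeff_X_pow, sum_boole]

theorem coeff_geom_sum_X_pow_mul [Semiring R] {q r : ℕ} {w : R[X]} (hw : w.natDegree < q)
    (hr : r < q) : ∀ {p k : ℕ}, k < p →
      ((∑ i ∈ range p, ((X : R[X]) ^ q) ^ i) * w).coeff (r + k * q) = w.coeff r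
  | _ + 1, 0, _ => by
    rw [geom_sum_succ, add_mul, one_mul, coeff_add, mul_assoc, coeff_X_pow_mul',
      if_neg (by omega), zero_mul, add_zero, zero_add]
  | _ + 1, k + 1, hk => by
    rw [geom_sum_succ, add_mul, one_mul, coeff_add, mul_assoc, coeff_X_pow_mul',
      if_pos (by nlinarith), coeff_eq_zero_of_natDegree_lt (p := w) (by nlinarith), add_zero,
      show r + (k + 1) * q - q = r + k * q by rw [add_mul]; omega]
    exact coeff_geom_sum_X_pow_mul hw hr (by omega)

theorem eq_one_of_coeff_nonneg_of_eval_one {w : ℤ[X]} (hnonneg : ∀ m, 0 ≤ w.coeff m)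
    (h0 : 1 ≤ w.coeff 0) (h1 : w.eval 1 = 1) : w = 1 := by
  have hsum : ∑ i ∈ range (w.natDegree + 1), w.coeff i = 1 := by
    simpa [eval_eq_sum_range] using h1
  have hpair : ∀ m ∈ range (w.natDegree + 1), m ≠ 0 → w.coeff 0 + w.coeff m ≤ 1 := by
    intro m hm hm0
    rw [← hsum, ← sum_pair (Ne.symm hm0)]
    exact sum_le_sum_of_subset_of_nonneg (by simp [insert_subset_iff, hm])
      fun i _ _ => hnonneg i
  ext m
  rw [coeff_one]
  split_ifs with hm
  · subst hm
    have := hsum ▸ single_le_sum (fun i _ => hnonneg i) (mem_range.2 (Nat.succ_pos _))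
    omega
  · by_cases hmd : m < w.natDegree + 1
    · have := hpair m (mem_range.2 hmd) hm
      have := hnonneg m
      omega
    · exact coeff_eq_zero_of_natDegree_lt (by omega)

theorem eq_cyclotomic_prime_pow_of_dvd {p k : ℕ} (hp : p.Prime) {g : ℤ[X]}
    (hdvd : cyclotomic (p ^ (k + 1)) ℤ ∣ g) (hdeg : g.natDegree < p ^ (k + 1))
    (hnonneg : ∀ m, 0 ≤ g.coeff m) (h0 : 1 ≤ g.coeff 0) (h1 : g.eval 1 = p) :
    g = cyclotomic (p ^ (k + 1)) ℤ := by
  have : Fact p.Prime := ⟨hp⟩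
  obtain ⟨w, rfl⟩ := hdvd
  have hw1 : w.eval 1 = 1 := by
    rw [eval_mul, eval_one_cyclotomic_prime_pow] at h1
    exact mul_left_cancel₀ (Int.natCast_ne_zero.2 hp.ne_zero) (h1.trans (mul_one _).symm)
  have hwdeg : w.natDegree < p ^ k := by
    have hw0 : w ≠ 0 := by rintro rfl; simp at hw1
    rw [natDegree_mul (cyclotomic_ne_zero _ ℤ) hw0, natDegree_cyclotomic,
      Nat.totient_prime_pow_succ hp, pow_succ, Nat.mul_sub_one] at hdeg
    have := Nat.le_mul_of_pos_right (p ^ k) hp.pos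
    omega
  have hcoeff : ∀ r < p ^ k, (cyclotomic (p ^ (k + 1)) ℤ * w).coeff r = w.coeff r := by
    intro r hr
    simpa [cyclotomic_prime_pow_eq_geom_sum hp] using
      coeff_geom_sum_X_pow_mul hwdeg hr (k := 0) hp.pos
  have hwnonneg : ∀ m, 0 ≤ w.coeff m := by
    intro m
    by_cases hm : m < p ^ k
    · exact hcoeff m hm ▸ hnonneg m
    · rw [coeff_eq_zero_of_natDegree_lt (by omega)]
  rw [eq_one_of_coeff_nonneg_of_eval_one hwnonneg (hcoeff 0 (pow_pos hp.pos k) ▸ h0) hw1,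
    mul_one]

theorem dvd_of_coeff_cyclotomic_mul_ne_zero [CommRing R] {p n m : ℕ} (hp : p.Prime)
    (hpn : p ∣ n) (h : (cyclotomic (n * p) R).coeff m ≠ 0) : p ∣ m := by
  rw [← cyclotomic_expand_eq_cyclotomic hp hpn, coeff_expand hp.pos] at h
  by_contra hm
  exact h (if_neg hm)

end Polynomial

theorem ZMod.closure_ne_top_of_forall_dvd_val {n p : ℕ} [NeZero n] (hp : 1 < p) (hpn : p ∣ n)
    {S : Set (ZMod n)} (hS : ∀ s ∈ S, p ∣ s.val) : AddSubgroup.closure S ≠ ⊤ := by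
  have : Fact (1 < p) := ⟨hp⟩
  let ψ : ZMod n →+ ZMod p := (ZMod.castHom hpn (ZMod p)).toAddMonoidHom
  have hle : AddSubgroup.closure S ≤ ψ.ker := (AddSubgroup.closure_le _).2 fun s hs => by
    change ZMod.cast s = (0 : ZMod p)
    rw [← ZMod.natCast_val, ZMod.natCast_eq_zero_iff]
    exact hS s hs
  intro htop
  have h1 : ψ 1 = 0 := hle (htop ▸ AddSubgroup.mem_top 1)
  exact one_ne_zero ((ZMod.castHom hpn (ZMod p)).map_one ▸ h1)

theorem cyclotomic_primePow_not_dvd_fS_general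
    (p n : ℕ) (hp : p.Prime) (hn : 0 < n) (hpn : p ∣ n)
    (S : Finset (ZMod n)) (h0S : (0 : ZMod n) ∉ S)
    (hcard : S.card = p - 1)
    (hgen : AddSubgroup.closure (S : Set (ZMod n)) = ⊤) :
    ∀ j : ℕ, 2 ≤ j → p ^ j ∣ n →
      ¬ (Polynomial.cyclotomic (p ^ j) ℤ ∣ ∑ s ∈ insert (0 : ZMod n) S, (X : ℤ[X]) ^ s.val) := by
  have : NeZero n := ⟨hn.ne'⟩
  rintro j hj - hdvd
  obtain ⟨k, rfl⟩ : ∃ k, j = k + 1 + 1 := ⟨j - 2, by omega⟩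
  set N := p ^ (k + 1 + 1)
  set g : ℤ[X] := ∑ s ∈ insert (0 : ZMod n) S, X ^ (s.val % N)
  have hNpos : 0 < N := pow_pos hp.pos _
  have hcoeff_pos : ∀ s ∈ insert (0 : ZMod n) S, 1 ≤ g.coeff (s.val % N) := fun s hs => by
    rw [coeff_sum_X_pow]
    exact_mod_cast card_pos.2 ⟨s, by simp [hs]⟩
  have hg : g = cyclotomic N ℤ := by
    refine eq_cyclotomic_prime_pow_of_dvd hp ?_ ?_ (fun m => ?_) ?_ ?_
    · exact (dvd_sub_right hdvd).1 ((cyclotomic.dvd_X_pow_sub_one N ℤ).trans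
        (X_pow_sub_one_dvd_sum_X_pow_sub_sum_X_pow_mod _ _ N))
    · exact (natDegree_sum_le_of_forall_le _ _ fun s _ => (natDegree_X_pow_le _).trans
        (Nat.le_pred_of_lt (Nat.mod_lt _ hNpos))).trans_lt (Nat.pred_lt hNpos.ne')
    · rw [coeff_sum_X_pow]; positivity
    · simpa using hcoeff_pos 0 (mem_insert_self 0 S)
    · simp [g, eval_finsetSum, card_insert_of_notMem h0S, hcard, hp.one_le]
  refine ZMod.closure_ne_top_of_forall_dvd_val hp.one_lt hpn (fun s hs => ?_) hgen
  have hs : (cyclotomic (p ^ (k + 1) * p) ℤ).coeff (s.val % N) ≠ 0 := by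
    rw [← pow_succ, ← hg]
    exact (Int.one_pos.trans_le (hcoeff_pos s (mem_insert_of_mem hs))).ne'
  exact (Nat.dvd_mod_iff (dvd_pow_self p (by omega))).1
    (dvd_of_coeff_cyclotomic_mul_ne_zero hp (dvd_pow_self p (by omega)) hs)

/-- **Claim 2** in the proof of Theorem 1.1: for an odd prime `p`, `p ∣ n`, and `S` generating
`Z_n` with `|S| = p - 1`, for every `j ≥ 2` with `p^j ∣ n`, the cyclotomic polynomial
`λ_{p^j}(x)` does not divide `f_{S∪{0}}(x)`. -/
theorem cyclotomic_primePow_not_dvd_fS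
    (p n : ℕ) (hp : p.Prime) (hodd : Odd p) (hn : 0 < n) (hpn : p ∣ n)
    (S : Finset (ZMod n)) (h0S : (0 : ZMod n) ∉ S) (hSneg : ∀ s ∈ S, -s ∈ S)
    (hcard : S.card = p - 1)
    (hgen : AddSubgroup.closure (S : Set (ZMod n)) = ⊤) :
    ∀ j : ℕ, 2 ≤ j → p ^ j ∣ n →
      ¬ (Polynomial.cyclotomic (p ^ j) ℤ ∣ ∑ s ∈ insert (0 : ZMod n) S, (X : ℤ[X]) ^ s.val) :=
  cyclotomic_primePow_not_dvd_fS_general p n hp hn hpn S h0S hcard hgen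
end

section
/- Let p be an odd prime, let n be a positive integer, and let S be a subset of Z_n with 0 ∉ S, S = −S, |S| = p − 1, and S generating Z_n. If the circulant graph Cay(Z_n, S) admits a perfect code, then the p-th cyclotomic polynomial λ_p(x) divides the polynomial f_{S∪{0}}(x) in Z[x]. -/
open Polynomial

/-! A perfect code `C` makes `Z_n = C ⊕ (S ∪ {0})` a tiling, so
`f_C · f_{S∪{0}} ≡ 1 + X + ⋯ + X^(n-1) (mod X^n - 1)` and `n = p · |C|`. Hence for every prime
power `p^j ∣ n` the irreducible `Φ_{p^j}` divides `f_C` or `f_{S∪{0}}`. For `j ≥ 2` the second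
alternative is impossible: modulo `p` we have `Φ_{p^j} = (X - 1)^(p^(j-1)(p-1))`, a multiple of
`X^p - 1`, which forces all `p` exponents of `f_{S∪{0}}` into one residue class mod `p`, i.e. `S`
into the proper subgroup `p Z_n`. So if `Φ_p ∤ f_{S∪{0}}`, every `Φ_{p^j}` with `p^j ∣ n` divides
`f_C`, and evaluating their product at `1` gives `p^(v_p n) ∣ |C| = n / p`, which is absurd. -/

open Finset

theorem pow_sub_one_dvd_pow_sub_pow_of_modEq {R : Type*} [CommRing R] (x : R) {n k l : ℕ}
    (h : k ≡ l [MOD n]) : x ^ n - 1 ∣ x ^ k - x ^ l := by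
  have reduce (k : ℕ) : x ^ n - 1 ∣ x ^ k - x ^ (k % n) := by
    have hsplit : x ^ k - x ^ (k % n) = ((x ^ n) ^ (k / n) - 1) * x ^ (k % n) := by
      rw [sub_one_mul, ← pow_mul, ← pow_add, Nat.div_add_mod]
    rw [hsplit]
    exact (sub_one_dvd_pow_sub_one _ _).mul_right _
  have hkl : x ^ k - x ^ l = (x ^ k - x ^ (k % n)) - (x ^ l - x ^ (l % n)) := by
    rw [show k % n = l % n from h]; ring
  rw [hkl]
  exact dvd_sub (reduce k) (reduce l)

theorem card_filter_mod_eq_zero_of_X_pow_sub_one_dvd {R ι : Type*} [CommRing R] [IsDomain R]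
    {n : ℕ} (hn : 0 < n) {T : Finset ι} {e : ι → ℕ}
    (h : (X ^ n - 1 : R[X]) ∣ ∑ i ∈ T, X ^ e i) (t : ℕ) :
    (#{i ∈ T | e i % n = t} : R) = 0 := by
  set r : R[X] := ∑ i ∈ T, X ^ (e i % n)
  have hr_dvd : (X ^ n - 1 : R[X]) ∣ r := by
    have hdiff : (X ^ n - 1 : R[X]) ∣ ∑ i ∈ T, (X ^ e i - X ^ (e i % n)) :=
      dvd_sum fun i _ => pow_sub_one_dvd_pow_sub_pow_of_modEq X (Nat.mod_modEq _ n).symm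
    simpa [r, sum_sub_distrib] using dvd_sub h hdiff
  have hdeg_X : (X ^ n - 1 : R[X]).natDegree = n := by
    simpa using natDegree_X_pow_sub_C (R := R) (n := n) (r := 1)
  have hr_deg : r.natDegree < (X ^ n - 1 : R[X]).natDegree := by
    rw [hdeg_X]
    refine lt_of_le_of_lt (natDegree_sum_le_of_forall_le _ _ (n := n - 1) fun i _ => ?_) (by omega)
    rw [natDegree_X_pow]
    have := Nat.mod_lt (e i) hn
    omega
  have hr_zero : r = 0 := eq_zero_of_dvd_of_natDegree_lt hr_dvd hr_deg
  have hcoeff : r.coeff t = #{i ∈ T | e i % n = t} := by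
    simp [r, finsetSum_coeff, coeff_X_pow, sum_boole, eq_comm]
  rw [← hcoeff, hr_zero, coeff_zero]

theorem X_pow_sub_one_dvd_cyclotomic_prime_pow_zmod {p m : ℕ} [Fact p.Prime] (hm : 0 < m) :
    (X ^ p - 1 : (ZMod p)[X]) ∣ cyclotomic (p ^ (m + 1)) (ZMod p) := by
  have hp : p.Prime := Fact.out
  have hcyc : cyclotomic (p ^ (m + 1)) (ZMod p) = (X - 1) ^ (p ^ (m + 1) - p ^ m) := by
    have := cyclotomic_mul_prime_pow_eq (ZMod p) (m := 1) hp.not_dvd_one m.succ_pos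
    rwa [mul_one, cyclotomic_one] at this
  have hexp : p ≤ p ^ (m + 1) - p ^ m := by
    rw [pow_succ, ← Nat.mul_sub_one]
    calc p = p ^ 1 := (pow_one p).symm
      _ ≤ p ^ m := Nat.pow_le_pow_right hp.pos hm
      _ ≤ p ^ m * (p - 1) := Nat.le_mul_of_pos_right _ (Nat.sub_pos_of_lt hp.one_lt)
  have hfrob : (X ^ p - 1 : (ZMod p)[X]) = (X - 1) ^ p := by rw [sub_pow_char, one_pow]
  rw [hcyc, hfrob]
  exact pow_dvd_pow _ hexp

theorem forall_prime_dvd_of_cyclotomic_prime_pow_dvd {ι : Type*} {p m : ℕ} (hp : p.Prime)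
    (hm : 0 < m) {T : Finset ι} {e : ι → ℕ} (hT : #T = p) {i₀ : ι} (hi₀ : i₀ ∈ T)
    (hpi₀ : p ∣ e i₀) (h : cyclotomic (p ^ (m + 1)) ℤ ∣ ∑ i ∈ T, X ^ e i) :
    ∀ i ∈ T, p ∣ e i := by
  have : Fact p.Prime := ⟨hp⟩
  have hmod : (X ^ p - 1 : (ZMod p)[X]) ∣ ∑ i ∈ T, X ^ e i := by
    refine (X_pow_sub_one_dvd_cyclotomic_prime_pow_zmod hm).trans ?_
    simpa [Polynomial.map_sum] using Polynomial.map_dvd (Int.castRingHom (ZMod p)) h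
  have hcount := card_filter_mod_eq_zero_of_X_pow_sub_one_dvd hp.pos hmod 0
  simp only [← Nat.dvd_iff_mod_eq_zero] at hcount
  rw [ZMod.natCast_eq_zero_iff] at hcount
  have hpos : 0 < #{i ∈ T | p ∣ e i} := card_pos.mpr ⟨i₀, mem_filter.mpr ⟨hi₀, hpi₀⟩⟩
  have hle : #{i ∈ T | p ∣ e i} ≤ #T := card_filter_le _ _
  have hall : #{i ∈ T | p ∣ e i} = #T := by
    rw [hT] at hle ⊢
    exact le_antisymm hle (Nat.le_of_dvd hpos hcount)
  exact filter_card_eq hall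

theorem circulantGraph_adj_iff {n : ℕ} {S : Finset (ZMod n)} (hSneg : ∀ s ∈ S, -s ∈ S)
    {u v : ZMod n} : (circulantGraph n S).Adj u v ↔ u ≠ v ∧ v - u ∈ S := by
  rw [circulantGraph, SimpleGraph.fromRel_adj]
  refine and_congr_right fun _ => ⟨?_, Or.inl⟩
  rintro (h | h)
  · exact h
  · simpa using hSneg _ h

theorem IsPerfectCode.existsUnique_sub_mem {n : ℕ} {S : Finset (ZMod n)}
    (hSneg : ∀ s ∈ S, -s ∈ S) {C : Set (ZMod n)} (hC : IsPerfectCode (circulantGraph n S) C)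
    (v : ZMod n) : ∃! c, c ∈ C ∧ v - c ∈ insert 0 S := by
  obtain ⟨hindep, hdom⟩ := hC
  by_cases hv : v ∈ C
  · refine ⟨v, ⟨hv, by simp⟩, fun c ⟨hc, hvc⟩ => ?_⟩
    by_contra hcv
    rcases mem_insert.mp hvc with h | h
    · exact hcv (sub_eq_zero.mp h).symm
    · exact hindep c hc v hv ((circulantGraph_adj_iff hSneg).mpr ⟨hcv, h⟩)
  · obtain ⟨c, ⟨hc, hvc⟩, huniq⟩ := hdom v hv
    rw [circulantGraph_adj_iff hSneg] at hvc
    refine ⟨c, ⟨hc, mem_insert_of_mem (by simpa using hSneg _ hvc.2)⟩, fun c' ⟨hc', hvc'⟩ => ?_⟩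
    rcases mem_insert.mp hvc' with h | h
    · exact absurd (sub_eq_zero.mp h ▸ hc') hv
    · refine huniq c' ⟨hc', (circulantGraph_adj_iff hSneg).mpr ⟨?_, by simpa using hSneg _ h⟩⟩
      rintro rfl
      exact hv hc'

theorem IsPerfectCode.isComplement {n : ℕ} {S : Finset (ZMod n)} (hSneg : ∀ s ∈ S, -s ∈ S)
    {C : Set (ZMod n)} (hC : IsPerfectCode (circulantGraph n S) C) :
    AddSubgroup.IsComplement C (insert 0 S : Finset (ZMod n)) := by
  refine AddSubgroup.isComplement_iff_existsUnique.mpr fun v => ?_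
  obtain ⟨c, ⟨hc, hvc⟩, huniq⟩ := hC.existsUnique_sub_mem hSneg v
  refine ⟨(⟨c, hc⟩, ⟨v - c, hvc⟩), add_sub_cancel c v, ?_⟩
  rintro ⟨⟨c', hc'⟩, ⟨s', hs'⟩⟩ (rfl : c' + s' = v)
  obtain rfl : c' = c := huniq c' ⟨hc', by simpa using hs'⟩
  simp

theorem sum_X_pow_val_univ (R : Type*) [CommSemiring R] (n : ℕ) [NeZero n] :
    ∑ v : ZMod n, (X : R[X]) ^ v.val = ∑ i ∈ range n, X ^ i := by
  refine sum_nbij' ZMod.val (fun i => (i : ZMod n)) (fun v _ => mem_range.mpr (ZMod.val_lt v))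
    (fun _ _ => mem_univ _) (fun v _ => ZMod.natCast_zmod_val v)
    (fun i hi => ZMod.val_cast_of_lt (mem_range.mp hi)) (fun _ _ => rfl)

theorem X_pow_sub_one_dvd_mul_sub_geom_sum_of_isComplement {R : Type*} [CommRing R] {n : ℕ}
    [NeZero n] {A B : Finset (ZMod n)} (h : AddSubgroup.IsComplement (A : Set (ZMod n)) B) :
    (X ^ n - 1 : R[X]) ∣
      (∑ a ∈ A, X ^ a.val) * (∑ b ∈ B, X ^ b.val) - ∑ i ∈ range n, X ^ i := by
  have hprod : (∑ a ∈ A, (X : R[X]) ^ a.val) * (∑ b ∈ B, X ^ b.val) =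
      ∑ x : A × B, X ^ ((x.1 : ZMod n).val + (x.2 : ZMod n).val) := by
    rw [Fintype.sum_prod_type, ← sum_coe_sort A, sum_mul]
    simp only [← sum_coe_sort B, mul_sum, pow_add]
  have htile : ∑ x : A × B, (X : R[X]) ^ ((x.1 + x.2 : ZMod n)).val =
      ∑ i ∈ range n, X ^ i := by
    rw [← sum_X_pow_val_univ]
    exact h.sum_comp (fun v => (X : R[X]) ^ v.val)
  rw [hprod, ← htile, ← sum_sub_distrib]
  refine dvd_sum fun x _ => pow_sub_one_dvd_pow_sub_pow_of_modEq X ?_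
  rw [ZMod.val_add]
  exact (Nat.mod_modEq _ n).symm

theorem cyclotomic_dvd_or_of_isComplement {n d : ℕ} [NeZero n] {A B : Finset (ZMod n)}
    (h : AddSubgroup.IsComplement (A : Set (ZMod n)) B) (hdn : d ∣ n) (hd : d ≠ 1) :
    cyclotomic d ℤ ∣ ∑ a ∈ A, X ^ a.val ∨ cyclotomic d ℤ ∣ ∑ b ∈ B, X ^ b.val := by
  have hd0 : 0 < d := Nat.pos_of_dvd_of_pos hdn (Nat.pos_of_neZero n)
  have hprime : Prime (cyclotomic d ℤ) := (cyclotomic.irreducible hd0).prime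
  refine hprime.dvd_or_dvd ?_
  have hX : cyclotomic d ℤ ∣ X ^ n - 1 := by
    obtain ⟨c, rfl⟩ := hdn
    exact (cyclotomic.dvd_X_pow_sub_one d ℤ).trans (pow_one_sub_dvd_pow_mul_sub_one X d c)
  simpa using dvd_add (hX.trans (X_pow_sub_one_dvd_mul_sub_geom_sum_of_isComplement h))
    (cyclotomic_dvd_geom_sum_of_dvd ℤ hdn hd)

theorem ZMod.exists_not_dvd_val_of_closure_eq_top {n p : ℕ} [NeZero n] (hp : p ≠ 1) (hpn : p ∣ n)
    {S : Set (ZMod n)} (hS : AddSubgroup.closure S = ⊤) : ∃ s ∈ S, ¬ p ∣ s.val := by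
  by_contra! hdvd
  have : Nontrivial (ZMod p) := ZMod.nontrivial_iff.mpr hp
  let f := (ZMod.castHom hpn (ZMod p)).toAddMonoidHom
  have hker : AddSubgroup.closure S ≤ f.ker := by
    refine (AddSubgroup.closure_le _).mpr fun s hs => ?_
    show ZMod.castHom hpn (ZMod p) s = 0
    rw [← ZMod.natCast_zmod_val s, map_natCast, ZMod.natCast_eq_zero_iff]
    exact hdvd s hs
  have h1 : ZMod.castHom hpn (ZMod p) 1 = 0 := hker (hS ▸ AddSubgroup.mem_top 1)
  exact one_ne_zero (map_one (ZMod.castHom hpn (ZMod p)) ▸ h1)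

theorem cyclotomic_isRelPrime {a b : ℕ} (ha : 0 < a) (hb : 0 < b) (hab : a ≠ b) :
    IsRelPrime (cyclotomic a ℤ) (cyclotomic b ℤ) := by
  refine (cyclotomic.irreducible ha).isRelPrime_iff_not_dvd.mpr fun hdvd => hab ?_
  refine cyclotomic_injective (R := ℤ) (eq_of_monic_of_associated (cyclotomic.monic a ℤ)
    (cyclotomic.monic b ℤ) ?_)
  exact (cyclotomic.irreducible ha).associated_of_dvd (cyclotomic.irreducible hb) hdvd

theorem prime_pow_dvd_eval_one_of_cyclotomic_dvd {p k : ℕ} (hp : p.Prime) {f : ℤ[X]}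
    (h : ∀ j < k, cyclotomic (p ^ (j + 1)) ℤ ∣ f) : (p ^ k : ℤ) ∣ f.eval 1 := by
  have : Fact p.Prime := ⟨hp⟩
  have hprod : ∏ j ∈ range k, cyclotomic (p ^ (j + 1)) ℤ ∣ f := by
    refine prod_dvd_of_isRelPrime (fun i _ j _ hij => cyclotomic_isRelPrime
      (pow_pos hp.pos _) (pow_pos hp.pos _) ?_) fun j hj => h j (mem_range.mp hj)
    exact fun heq => hij (by simpa using Nat.pow_right_injective hp.two_le heq)
  simpa [eval_prod, eval_one_cyclotomic_prime_pow] using eval_dvd (x := 1) hprod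

theorem cyclotomic_prime_dvd_fS_of_perfectCode_general
    (p n : ℕ) (hp : p.Prime) (hn : 0 < n)
    (S : Finset (ZMod n)) (h0S : (0 : ZMod n) ∉ S) (hSneg : ∀ s ∈ S, -s ∈ S)
    (hcard : S.card = p - 1)
    (hgen : AddSubgroup.closure (S : Set (ZMod n)) = ⊤)
    (hex : ∃ C : Set (ZMod n), IsPerfectCode (circulantGraph n S) C) :
    Polynomial.cyclotomic p ℤ ∣ ∑ s ∈ insert (0 : ZMod n) S, (X : ℤ[X]) ^ s.val := by
  have : NeZero n := ⟨hn.ne'⟩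
  have : Fact p.Prime := ⟨hp⟩
  obtain ⟨C, hC⟩ := hex
  obtain ⟨C, rfl⟩ := C.toFinite.exists_finset_coe
  have htile := hC.isComplement hSneg
  have hcard₀ : #(insert 0 S) = p := by
    rw [card_insert_of_notMem h0S, hcard, Nat.sub_add_cancel hp.one_le]
  have hn_eq : #C * p = n := by simpa [hcard₀] using htile.card_mul_card
  by_contra hS₀
  have hC_dvd : ∀ j < padicValNat p n, cyclotomic (p ^ (j + 1)) ℤ ∣ ∑ c ∈ C, X ^ c.val := by
    intro j hj
    have hpj : p ^ (j + 1) ∣ n := (pow_dvd_pow p hj).trans pow_padicValNat_dvd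
    refine (cyclotomic_dvd_or_of_isComplement htile hpj
      (Nat.one_lt_pow j.succ_ne_zero hp.one_lt).ne').resolve_right ?_
    rcases j with _ | m
    · simpa using hS₀
    · intro hdvd
      obtain ⟨s, hs, hps⟩ := ZMod.exists_not_dvd_val_of_closure_eq_top hp.ne_one
        (hn_eq ▸ dvd_mul_left p _) hgen
      exact hps (forall_prime_dvd_of_cyclotomic_prime_pow_dvd hp m.succ_pos hcard₀
        (mem_insert_self 0 S) (by simp) hdvd s (mem_insert_of_mem hs))
  have hpC : p ^ padicValNat p n ∣ #C := by
    have h := prime_pow_dvd_eval_one_of_cyclotomic_dvd hp hC_dvd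
    simp only [eval_finsetSum, eval_pow, eval_X, one_pow, sum_const, nsmul_one] at h
    exact_mod_cast h
  exact pow_succ_padicValNat_not_dvd hn.ne' (hn_eq ▸ pow_succ p _ ▸ mul_dvd_mul_right hpC p)

/-- In the proof of Theorem 1.1: if the connected circulant graph `Cay(Z_n, S)` of degree
`p - 1` (`p` an odd prime) admits a perfect code, then the `p`-th cyclotomic polynomial
`λ_p(x)` divides `f_{S∪{0}}(x)` in `ℤ[x]`. -/
theorem cyclotomic_prime_dvd_fS_of_perfectCode
    (p n : ℕ) (hp : p.Prime) (hodd : Odd p) (hn : 0 < n)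
    (S : Finset (ZMod n)) (h0S : (0 : ZMod n) ∉ S) (hSneg : ∀ s ∈ S, -s ∈ S)
    (hcard : S.card = p - 1)
    (hgen : AddSubgroup.closure (S : Set (ZMod n)) = ⊤)
    (hex : ∃ C : Set (ZMod n), IsPerfectCode (circulantGraph n S) C) :
    Polynomial.cyclotomic p ℤ ∣ ∑ s ∈ insert (0 : ZMod n) S, (X : ℤ[X]) ^ s.val :=
  cyclotomic_prime_dvd_fS_of_perfectCode_general p n hp hn S h0S hSneg hcard hgen hex
end
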